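/- arXiv:0810.0794 — 10 statements merged into one kernel-verified Lean document; each statement's English description precedes it below -/
import Mathlib

section
/- Let π : 𝟙 → e be an idempotent arrow in a monoidal category M. An object X of M lies in eM (i.e., e ⊗ X ≅ X) if and only if the morphism π ⊗ id_X : 𝟙 ⊗ X → e ⊗ X is an isomorphism; likewise, X lies in Me (i.e., X ⊗ e ≅ X) if and only if id_X ⊗ π : X ⊗ 𝟙 → X ⊗ e is an isomorphism. -/
/-!
If `e ⊗ X ≅ X`, then `π ▷ X` is isomorphic, as an arrow, to `π ▷ (e ⊗ X)`, which is
`(π ▷ e) ▷ X` up to associators and hence invertible. Conversely, if `π ▷ X` is invertible,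
then `e ⊗ X ≅ 𝟙 ⊗ X ≅ X`. The statement about `Me` is the mirror image.
-/

open CategoryTheory MonoidalCategory

namespace CategoryTheory.MonoidalCategory

variable {C : Type*} [Category C] [MonoidalCategory C]

section Whiskering

variable {A B : C} (f : A ⟶ B)

lemma whiskerRight_eq_of_iso {Y Z : C} (i : Y ≅ Z) :
    f ▷ Z = A ◁ i.inv ≫ f ▷ Y ≫ B ◁ i.hom := by
  rw [whisker_exchange_assoc, ← whiskerLeft_comp, i.inv_hom_id, whiskerLeft_id, Category.comp_id]

lemma whiskerLeft_eq_of_iso {Y Z : C} (i : Y ≅ Z) :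
    Z ◁ f = i.inv ▷ A ≫ Y ◁ f ≫ i.hom ▷ B := by
  rw [← whisker_exchange_assoc, ← comp_whiskerRight, i.inv_hom_id, id_whiskerRight,
    Category.comp_id]

lemma isIso_whiskerRight_of_iso {Y Z : C} (i : Y ≅ Z) [IsIso (f ▷ Y)] : IsIso (f ▷ Z) := by
  rw [whiskerRight_eq_of_iso f i]
  infer_instance

lemma isIso_whiskerLeft_of_iso {Y Z : C} (i : Y ≅ Z) [IsIso (Y ◁ f)] : IsIso (Z ◁ f) := by
  rw [whiskerLeft_eq_of_iso f i]
  infer_instance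

instance isIso_whiskerRight_tensor (Y Z : C) [IsIso (f ▷ Y)] : IsIso (f ▷ (Y ⊗ Z)) := by
  rw [whiskerRight_tensor]
  infer_instance

instance isIso_tensor_whiskerLeft (Y Z : C) [IsIso (Z ◁ f)] : IsIso ((Y ⊗ Z) ◁ f) := by
  rw [tensor_whiskerLeft]
  infer_instance

end Whiskering

variable {e : C} (π : 𝟙_ C ⟶ e)

lemma nonempty_tensorLeft_iso_iff_isIso_whiskerRight [IsIso (π ▷ e)] (X : C) :
    Nonempty (e ⊗ X ≅ X) ↔ IsIso (π ▷ X) :=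
  ⟨fun ⟨φ⟩ => isIso_whiskerRight_of_iso π φ, fun _ => ⟨(asIso (π ▷ X)).symm ≪≫ λ_ X⟩⟩

lemma nonempty_tensorRight_iso_iff_isIso_whiskerLeft [IsIso (e ◁ π)] (X : C) :
    Nonempty (X ⊗ e ≅ X) ↔ IsIso (X ◁ π) :=
  ⟨fun ⟨φ⟩ => isIso_whiskerLeft_of_iso π φ, fun _ => ⟨(asIso (X ◁ π)).symm ≪≫ ρ_ X⟩⟩

end CategoryTheory.MonoidalCategory

/-- Let `π : 𝟙 → e` be an idempotent arrow in a monoidal category `M`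
(i.e. both `π ▷ e : 𝟙 ⊗ e → e ⊗ e` and `e ◁ π : e ⊗ 𝟙 → e ⊗ e` are isomorphisms).
An object `X` lies in `eM` (i.e. `e ⊗ X ≅ X`) iff `π ▷ X : 𝟙 ⊗ X → e ⊗ X` is an
isomorphism, and `X` lies in `Me` (i.e. `X ⊗ e ≅ X`) iff `X ◁ π : X ⊗ 𝟙 → X ⊗ e`
is an isomorphism. -/
theorem stmt_0 {M : Type*} [Category M] [MonoidalCategory M]
    (e : M) (π : 𝟙_ M ⟶ e) (hπr : IsIso (π ▷ e)) (hπl : IsIso (e ◁ π)) (X : M) :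
    (Nonempty (e ⊗ X ≅ X) ↔ IsIso (π ▷ X)) ∧
    (Nonempty (X ⊗ e ≅ X) ↔ IsIso (X ◁ π)) :=
  ⟨nonempty_tensorLeft_iso_iff_isIso_whiskerRight π X,
    nonempty_tensorRight_iso_iff_isIso_whiskerLeft π X⟩
end

section
/- Let π : 𝟙 → e be an idempotent arrow in a monoidal category M, let M₀ be an arbitrary object of M, and let X be an object with X ⊗ e ≅ X. If f, g : M₀ ⊗ e → X are two morphisms such that f ∘ (id_{M₀} ⊗ π) = g ∘ (id_{M₀} ⊗ π) as morphisms M₀ ⊗ 𝟙 → X, then f = g. -/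
/-!
Whiskering by `e` turns `M₀ ◁ π` into an isomorphism (since `π ▷ e` is one), so the hypothesis
gives `f ▷ e = g ▷ e`. Since `X ≅ X ⊗ e` and `e ◁ π` is invertible, so is `X ◁ π`, and then the
interchange law `f ▷ 𝟙 ≫ X ◁ π = _ ◁ π ≫ f ▷ e` shows that `f ↦ f ▷ e` is injective on morphisms
into `X`.
-/

open CategoryTheory MonoidalCategory

namespace CategoryTheory.MonoidalCategory

variable {M : Type*} [Category M] [MonoidalCategory M] {e : M}

lemma isIso_whiskerRight_whiskerLeft (π : 𝟙_ M ⟶ e) [IsIso (π ▷ e)] (Y : M) :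
    IsIso ((Y ◁ π) ▷ e) := by
  rw [whisker_assoc]
  infer_instance

lemma isIso_tensor_whiskerLeft_s1 (π : 𝟙_ M ⟶ e) [IsIso (e ◁ π)] (X : M) :
    IsIso ((X ⊗ e) ◁ π) := by
  rw [tensor_whiskerLeft]
  infer_instance

lemma isIso_whiskerLeft_of_iso_s1 (π : 𝟙_ M ⟶ e) {X Y : M} (φ : X ≅ Y)
    [IsIso (X ◁ π)] : IsIso (Y ◁ π) := by
  have : IsIso ((φ.hom ▷ 𝟙_ M) ≫ (Y ◁ π)) := by
    rw [← whisker_exchange]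
    infer_instance
  exact IsIso.of_isIso_comp_left (φ.hom ▷ 𝟙_ M) (Y ◁ π)

lemma whiskerRight_unit_injective {Y X : M} {f g : Y ⟶ X} (h : f ▷ 𝟙_ M = g ▷ 𝟙_ M) :
    f = g := by
  simpa using congrArg (fun t => (ρ_ Y).inv ≫ t ≫ (ρ_ X).hom) h

lemma whiskerRight_injective_of_isIso_whiskerLeft (π : 𝟙_ M ⟶ e) {Y X : M} [IsIso (X ◁ π)]
    {f g : Y ⟶ X} (h : f ▷ e = g ▷ e) : f = g := by
  apply whiskerRight_unit_injective
  rw [← cancel_mono (X ◁ π), ← whisker_exchange, ← whisker_exchange, h]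

end CategoryTheory.MonoidalCategory

/-- Let `π : 𝟙 → e` be an idempotent arrow in a monoidal category `M`,
`M₀` an arbitrary object, and `X` an object with `X ⊗ e ≅ X`.  If
`f, g : M₀ ⊗ e → X` satisfy `f ∘ (id ⊗ π) = g ∘ (id ⊗ π)` then `f = g`. -/
theorem stmt_1 {M : Type*} [Category M] [MonoidalCategory M]
    (e : M) (π : 𝟙_ M ⟶ e) (hπr : IsIso (π ▷ e)) (hπl : IsIso (e ◁ π))
    (M₀ X : M) (hX : Nonempty (X ⊗ e ≅ X))
    (f g : M₀ ⊗ e ⟶ X) (h : (M₀ ◁ π) ≫ f = (M₀ ◁ π) ≫ g) :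
    f = g := by
  obtain ⟨φ⟩ := hX
  have := isIso_tensor_whiskerLeft_s1 π X
  have := isIso_whiskerLeft_of_iso_s1 π φ
  have := isIso_whiskerRight_whiskerLeft π M₀
  apply whiskerRight_injective_of_isIso_whiskerLeft π
  rw [← cancel_epi ((M₀ ◁ π) ▷ e), ← comp_whiskerRight, ← comp_whiskerRight, h]
end

section
/- If π : 𝟙 → e is an idempotent arrow in a monoidal category M and f : e → e is a morphism such that f ∘ π = π, then f = id_e. In particular, an idempotent arrow has no nontrivial automorphisms. -/
/-!
Whiskering `f` by `e` on the left, the equation `π ≫ f = π` and the invertibility of `e ◁ π`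
give `e ◁ f = 𝟙`. Interchange of whiskerings then transports this along `π ▷ e` to
`𝟙_ M ◁ f = 𝟙`, and the left unitor identifies `𝟙_ M ◁ f` with `f`.
-/

open CategoryTheory MonoidalCategory

namespace CategoryTheory.MonoidalCategory

variable {M : Type*} [Category M] [MonoidalCategory M]

theorem whiskerLeft_eq_id_of_comp_eq {A e : M} (X : M) (π : A ⟶ e) [Epi (X ◁ π)]
    {f : e ⟶ e} (hf : π ≫ f = π) : X ◁ f = 𝟙 (X ⊗ e) := by
  rw [← cancel_epi (X ◁ π), ← whiskerLeft_comp, hf, Category.comp_id]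

theorem whiskerLeft_eq_id_of_whiskerRight_mono {X Y Z : M} (π : X ⟶ Y) [Mono (π ▷ Z)]
    {f : Z ⟶ Z} (hf : Y ◁ f = 𝟙 (Y ⊗ Z)) : X ◁ f = 𝟙 (X ⊗ Z) := by
  rw [← cancel_mono (π ▷ Z), whisker_exchange, hf, Category.comp_id, Category.id_comp]

theorem eq_id_of_id_whiskerLeft_eq_id {X : M} {f : X ⟶ X} (hf : 𝟙_ M ◁ f = 𝟙 (𝟙_ M ⊗ X)) :
    f = 𝟙 X := by
  simpa [hf] using id_whiskerLeft_symm f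

end CategoryTheory.MonoidalCategory

/-- If `π : 𝟙 → e` is an idempotent arrow in a monoidal category `M`
and `f : e → e` satisfies `f ∘ π = π`, then `f = id_e`. -/
theorem stmt_2 {M : Type*} [Category M] [MonoidalCategory M]
    (e : M) (π : 𝟙_ M ⟶ e) (hπr : IsIso (π ▷ e)) (hπl : IsIso (e ◁ π))
    (f : e ⟶ e) (hf : π ≫ f = π) :
    f = 𝟙 e :=
  eq_id_of_id_whiskerLeft_eq_id <|
    whiskerLeft_eq_id_of_whiskerRight_mono π <| whiskerLeft_eq_id_of_comp_eq e π hf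
end

section
/- If π : 𝟙 → e is an idempotent arrow in a monoidal category M, then the map π* : Hom(e, e) → Hom(𝟙, e) given by f ↦ f ∘ π is bijective. -/
/-!
Precomposition with `π` is inverted by `h ↦ (ρ_ e).inv ≫ e ◁ h ≫ inv (π ▷ e) ≫ (λ_ e).hom`:
sliding `π` past `h` by the interchange law turns `π ≫ (ρ_ e).inv ≫ e ◁ h` into
`(λ_ 𝟙).inv ≫ 𝟙 ◁ h ≫ π ▷ e`. Injectivity comes from the same interchange: `π ≫ f` determines
`e ◁ f` because `e ◁ π` is epi, and `e ◁ f` determines `f` because `π ▷ e` is mono.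
-/

open CategoryTheory MonoidalCategory

namespace CategoryTheory.MonoidalCategory

variable {M : Type*} [Category M] [MonoidalCategory M] {e Y : M}

theorem comp_injective_of_epi_whiskerLeft_of_mono_whiskerRight (π : 𝟙_ M ⟶ e)
    [Epi (e ◁ π)] [Mono (π ▷ Y)] : Function.Injective (fun f : e ⟶ Y => π ≫ f) := by
  intro f g hfg
  have hwhisker : e ◁ f = e ◁ g := by
    rw [← cancel_epi (e ◁ π), ← whiskerLeft_comp, ← whiskerLeft_comp]
    exact congrArg (e ◁ ·) hfg
  have hnat (k : e ⟶ Y) : k ≫ (λ_ Y).inv ≫ π ▷ Y = (λ_ e).inv ≫ π ▷ e ≫ e ◁ k := by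
    rw [leftUnitor_inv_naturality_assoc, whisker_exchange]
  rw [← cancel_mono ((λ_ Y).inv ≫ π ▷ Y), hnat, hnat, hwhisker]

theorem comp_surjective_of_isIso_whiskerRight (π : 𝟙_ M ⟶ e) [IsIso (π ▷ Y)] :
    Function.Surjective (fun f : e ⟶ Y => π ≫ f) := by
  intro h
  refine ⟨(ρ_ e).inv ≫ e ◁ h ≫ inv (π ▷ Y) ≫ (λ_ Y).hom, ?_⟩
  calc π ≫ (ρ_ e).inv ≫ e ◁ h ≫ inv (π ▷ Y) ≫ (λ_ Y).hom
      = (λ_ (𝟙_ M)).inv ≫ 𝟙_ M ◁ h ≫ π ▷ Y ≫ inv (π ▷ Y) ≫ (λ_ Y).hom := by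
        rw [rightUnitor_inv_naturality_assoc, whisker_exchange_assoc, unitors_inv_equal]
    _ = h := by simp

end CategoryTheory.MonoidalCategory

/-- If `π : 𝟙 → e` is an idempotent arrow in a monoidal category `M`,
then the map `π* : Hom(e, e) → Hom(𝟙, e)`, `f ↦ f ∘ π`, is bijective. -/
theorem stmt_4 {M : Type*} [Category M] [MonoidalCategory M]
    (e : M) (π : 𝟙_ M ⟶ e) (hπr : IsIso (π ▷ e)) (hπl : IsIso (e ◁ π)) :
    Function.Bijective (fun f : e ⟶ e => π ≫ f) :=
  ⟨comp_injective_of_epi_whiskerLeft_of_mono_whiskerRight π,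
    comp_surjective_of_isIso_whiskerRight π⟩
end

section
/- If π : 𝟙 → e and π' : 𝟙 → e are two idempotent arrows in a monoidal category M with the same codomain e, then there exists a unique morphism σ : e → e such that π' = σ ∘ π, and moreover this σ is an isomorphism. -/
/-!
By the interchange law `𝟙 ◁ σ ≫ π ▷ e = π ▷ e ≫ e ◁ σ` and the invertibility of `π ▷ e` and
`e ◁ π`, an endomorphism `σ` of `e` can be read off from `e ◁ (π ≫ σ)`. So precomposition with
`π` is a bijection `(e ⟶ e) ≃ (𝟙 ⟶ e)` with an explicit inverse, and that inverse applied to `π'`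
is a composite of isomorphisms as soon as `e ◁ π'` is invertible.
-/

open CategoryTheory MonoidalCategory

namespace CategoryTheory.MonoidalCategory

variable {M : Type*} [Category M] [MonoidalCategory M] {e : M} (π : 𝟙_ M ⟶ e)
  [IsIso (π ▷ e)] [IsIso (e ◁ π)]

noncomputable def idempotentLift (x : 𝟙_ M ⟶ e) : e ⟶ e :=
  (λ_ e).inv ≫ π ▷ e ≫ inv (e ◁ π) ≫ e ◁ x ≫ inv (π ▷ e) ≫ (λ_ e).hom

theorem comp_idempotentLift (x : 𝟙_ M ⟶ e) : π ≫ idempotentLift π x = x := by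
  rw [idempotentLift, leftUnitor_inv_naturality_assoc, whisker_exchange_assoc,
    IsIso.hom_inv_id_assoc, ← whisker_exchange_assoc, IsIso.hom_inv_id_assoc,
    leftUnitor_naturality, Iso.inv_hom_id_assoc]

theorem idempotentLift_comp (σ : e ⟶ e) : idempotentLift π (π ≫ σ) = σ := by
  rw [idempotentLift, MonoidalCategory.whiskerLeft_comp_assoc, IsIso.inv_hom_id_assoc,
    ← whisker_exchange_assoc, IsIso.hom_inv_id_assoc, leftUnitor_naturality,
    Iso.inv_hom_id_assoc]

instance isIso_idempotentLift (x : 𝟙_ M ⟶ e) [IsIso (e ◁ x)] :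
    IsIso (idempotentLift π x) := by
  rw [idempotentLift]
  infer_instance

noncomputable def precompIdempotentEquiv : (e ⟶ e) ≃ (𝟙_ M ⟶ e) where
  toFun σ := π ≫ σ
  invFun := idempotentLift π
  left_inv := idempotentLift_comp π
  right_inv := comp_idempotentLift π

end CategoryTheory.MonoidalCategory

theorem stmt_5_general {M : Type*} [Category M] [MonoidalCategory M]
    (e : M) (π π' : 𝟙_ M ⟶ e)
    (hπr : IsIso (π ▷ e)) (hπl : IsIso (e ◁ π))
    (hπ'l : IsIso (e ◁ π')) :
    (∃! σ : e ⟶ e, π ≫ σ = π') ∧ (∀ σ : e ⟶ e, π ≫ σ = π' → IsIso σ) := by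
  refine ⟨(precompIdempotentEquiv π).bijective.existsUnique π', fun σ hσ => ?_⟩
  rw [← idempotentLift_comp π σ, hσ]
  infer_instance

/-- If `π, π' : 𝟙 → e` are two idempotent arrows with the same codomain
`e`, then there is a unique `σ : e → e` with `π' = σ ∘ π`, and this `σ` is an
isomorphism. -/
theorem stmt_5 {M : Type*} [Category M] [MonoidalCategory M]
    (e : M) (π π' : 𝟙_ M ⟶ e)
    (hπr : IsIso (π ▷ e)) (hπl : IsIso (e ◁ π))
    (hπ'r : IsIso (π' ▷ e)) (hπ'l : IsIso (e ◁ π')) :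
    (∃! σ : e ⟶ e, π ≫ σ = π') ∧ (∀ σ : e ⟶ e, π ≫ σ = π' → IsIso σ) :=
  stmt_5_general e π π' hπr hπl hπ'l
end

section
/- Let π : 𝟙 → e be an idempotent arrow in a monoidal category M. Let X be an object such that id_X ⊗ π : X ⊗ 𝟙 → X ⊗ e is an isomorphism, and Y an object such that π ⊗ id_Y : 𝟙 ⊗ Y → e ⊗ Y is an isomorphism. Define ρ^π_X = ρ_X ∘ (id_X ⊗ π)⁻¹ : X ⊗ e → X and λ^π_Y = λ_Y ∘ (π ⊗ id_Y)⁻¹ : e ⊗ Y → Y. Then (id_X ⊗ λ^π_Y) ∘ α_{X,e,Y} = ρ^π_X ⊗ id_Y as morphisms (X ⊗ e) ⊗ Y → X ⊗ Y; together with the equality λ^π_e = ρ^π_e, this shows that the Hecke subcategory eMe (of objects X with e ⊗ X ⊗ e ≅ X) is a monoidal category with unit object e and unit constraints λ^π, ρ^π. -/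
/-!
The triangle identity for `λ^π` and `ρ^π` follows from the ordinary one after precomposing with
the isomorphism `(X ◁ π) ▷ Y`. For `λ^π_e = ρ^π_e`, put `f := (ρ^π_e)⁻¹ ≫ λ^π_e : e ⟶ e`.
The triangle identity with `X = Y = e` shows `e ◁ f = 𝟙`, and naturality of `λ^π` gives
`λ^π_e ≫ f = e ◁ f ≫ λ^π_e = λ^π_e`; since `λ^π_e` is an isomorphism, `f = 𝟙`.
-/

open CategoryTheory MonoidalCategory

namespace CategoryTheory.MonoidalCategory

variable {M : Type*} [Category M] [MonoidalCategory M] {e : M} (π : 𝟙_ M ⟶ e)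

/-- `λ^π_Y`. -/
noncomputable def leftUnitorOf (Y : M) [IsIso (π ▷ Y)] : e ⊗ Y ⟶ Y :=
  inv (π ▷ Y) ≫ (λ_ Y).hom

/-- `ρ^π_X`. -/
noncomputable def rightUnitorOf (X : M) [IsIso (X ◁ π)] : X ⊗ e ⟶ X :=
  inv (X ◁ π) ≫ (ρ_ X).hom

instance (Y : M) [IsIso (π ▷ Y)] : IsIso (leftUnitorOf π Y) := by
  unfold leftUnitorOf; infer_instance

instance (X : M) [IsIso (X ◁ π)] : IsIso (rightUnitorOf π X) := by
  unfold rightUnitorOf; infer_instance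

lemma inv_rightUnitorOf (X : M) [IsIso (X ◁ π)] :
    inv (rightUnitorOf π X) = (ρ_ X).inv ≫ X ◁ π := by
  simp [rightUnitorOf]

lemma leftUnitorOf_naturality {Y Y' : M} (f : Y ⟶ Y') [IsIso (π ▷ Y)] [IsIso (π ▷ Y')] :
    e ◁ f ≫ leftUnitorOf π Y' = leftUnitorOf π Y ≫ f := by
  rw [leftUnitorOf, leftUnitorOf, Category.assoc, ← leftUnitor_naturality,
    ← cancel_epi (π ▷ Y), ← whisker_exchange_assoc, IsIso.hom_inv_id_assoc,
    IsIso.hom_inv_id_assoc]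

lemma unitorOf_triangle (X Y : M) [IsIso (X ◁ π)] [IsIso (π ▷ Y)] :
    (α_ X e Y).hom ≫ X ◁ leftUnitorOf π Y = rightUnitorOf π X ▷ Y := by
  rw [← cancel_epi ((X ◁ π) ▷ Y), associator_naturality_middle_assoc,
    ← whiskerLeft_comp, leftUnitorOf, IsIso.hom_inv_id_assoc, ← comp_whiskerRight,
    rightUnitorOf, IsIso.hom_inv_id_assoc, triangle]

lemma whiskerLeft_inv_rightUnitorOf_comp_leftUnitorOf [IsIso (π ▷ e)] [IsIso (e ◁ π)] :
    e ◁ (inv (rightUnitorOf π e) ≫ leftUnitorOf π e) = 𝟙 _ := by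
  have triangle_e : e ◁ leftUnitorOf π e = (α_ e e e).inv ≫ rightUnitorOf π e ▷ e := by
    rw [← unitorOf_triangle, Iso.inv_hom_id_assoc]
  rw [whiskerLeft_comp, triangle_e, inv_rightUnitorOf, whiskerLeft_comp, Category.assoc,
    associator_inv_naturality_right_assoc, whisker_exchange, ← rightUnitor_tensor_inv_assoc,
    ← rightUnitor_inv_naturality_assoc, ← inv_rightUnitorOf, IsIso.hom_inv_id]

lemma leftUnitorOf_self_eq_rightUnitorOf_self [IsIso (π ▷ e)] [IsIso (e ◁ π)] :
    leftUnitorOf π e = rightUnitorOf π e := by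
  have fixes : leftUnitorOf π e ≫ (inv (rightUnitorOf π e) ≫ leftUnitorOf π e) =
      leftUnitorOf π e ≫ 𝟙 _ := by
    rw [← leftUnitorOf_naturality, whiskerLeft_inv_rightUnitorOf_comp_leftUnitorOf,
      Category.id_comp, Category.comp_id]
  rw [cancel_epi, IsIso.inv_comp_eq, Category.comp_id] at fixes
  exact fixes

end CategoryTheory.MonoidalCategory

/-- Let `π : 𝟙 → e` be an idempotent arrow in a monoidal category `M`.
Let `X` be such that `X ◁ π : X ⊗ 𝟙 → X ⊗ e` is an isomorphism and `Y` such that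
`π ▷ Y : 𝟙 ⊗ Y → e ⊗ Y` is an isomorphism.  With
`ρ^π_X = ρ_X ∘ (id_X ⊗ π)⁻¹` and `λ^π_Y = λ_Y ∘ (π ⊗ id_Y)⁻¹`, we have
`(id_X ⊗ λ^π_Y) ∘ α_{X,e,Y} = ρ^π_X ⊗ id_Y`; moreover `λ^π_e = ρ^π_e`
(the two facts making the Hecke subcategory `eMe` monoidal with unit `e`). -/
theorem stmt_6 {M : Type*} [Category M] [MonoidalCategory M]
    (e : M) (π : 𝟙_ M ⟶ e) (hπr : IsIso (π ▷ e)) (hπl : IsIso (e ◁ π))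
    (X Y : M) (hX : IsIso (X ◁ π)) (hY : IsIso (π ▷ Y)) :
    ((α_ X e Y).hom ≫ (X ◁ (inv (π ▷ Y) ≫ (λ_ Y).hom)) =
      (inv (X ◁ π) ≫ (ρ_ X).hom) ▷ Y) ∧
    (inv (π ▷ e) ≫ (λ_ e).hom = inv (e ◁ π) ≫ (ρ_ e).hom) :=
  ⟨unitorOf_triangle π X Y, leftUnitorOf_self_eq_rightUnitorOf_self π⟩
end

section
/- Let C be a category, P : C → C an endofunctor, and ε : Id_C → P an idempotent arrow in the category of endofunctors of C (i.e., ε_{P(Y)} and P(ε_Y) are isomorphisms for all Y). Let D be the full subcategory of C consisting of objects X such that ε_X is an isomorphism. Then P(X) lies in D for every object X of C, the functor C → D induced by P is left adjoint to the inclusion functor D → C, and consequently D is a reflective subcategory of C. -/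
/-!
Comparing the naturality squares of `ε` at `ε_X`, `ε_{PX}` and `P ε_X`, and cancelling the
isomorphisms among them, gives `P ε_X = ε_{PX}`. Hence `ε` is a unit and the inverses `ε_Y⁻¹`
(for `Y` in `D`) form a counit: one triangle identity is `P ε_X ≫ ε_{PX}⁻¹ = 𝟙`, the other is
`ε_Y ≫ ε_Y⁻¹ = 𝟙`.
-/

open CategoryTheory

namespace CategoryTheory.NatTrans

variable {C : Type*} [Category C] {P : C ⥤ C} (ε : 𝟭 C ⟶ P)

theorem map_app_eq_app_obj (X : C) [Epi (ε.app (P.obj X))] [Epi (P.map (ε.app X))]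
    [Mono (ε.app (P.obj (P.obj X)))] : P.map (ε.app X) = ε.app (P.obj X) := by
  have hPP : P.map (ε.app (P.obj X)) = P.map (P.map (ε.app X)) := by
    rw [← cancel_epi (P.map (ε.app X)), ← P.map_comp, ← P.map_comp]
    exact congrArg P.map (ε.naturality (ε.app X))
  have hεP : ε.app (P.obj (P.obj X)) = P.map (ε.app (P.obj X)) :=
    (cancel_epi (ε.app (P.obj X))).1 (ε.naturality (ε.app (P.obj X)))
  rw [← cancel_mono (ε.app (P.obj (P.obj X)))]
  calc P.map (ε.app X) ≫ ε.app (P.obj (P.obj X))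
      = ε.app (P.obj X) ≫ P.map (P.map (ε.app X)) := ε.naturality (P.map (ε.app X))
    _ = ε.app (P.obj X) ≫ ε.app (P.obj (P.obj X)) := by rw [← hPP, hεP]

noncomputable def liftAdjunctionι (hP : ∀ X, IsIso (ε.app (P.obj X)))
    (hcomm : ∀ X, P.map (ε.app X) = ε.app (P.obj X)) :
    ObjectProperty.lift (fun X : C => IsIso (ε.app X)) P hP ⊣
      ObjectProperty.ι (fun X : C => IsIso (ε.app X)) :=
  Adjunction.mkOfUnitCounit
    { unit := ε
      counit :=
        { app := fun Y => ObjectProperty.homMk (@inv _ _ _ _ (ε.app Y.obj) Y.property)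
          naturality := by
            intro Y Y' f
            have := Y.property
            have := Y'.property
            ext
            simp }
      left_triangle := by
        ext X
        simp [hcomm]
      right_triangle := by
        ext Y
        have := Y.property
        simp }

end CategoryTheory.NatTrans

/-- Let `P : C ⥤ C` and `ε : Id_C ⟶ P` be an idempotent arrow in the
category of endofunctors of `C` (i.e. `ε_{P(Y)}` and `P(ε_Y)` are isomorphisms for
all `Y`).  Let `D` be the full subcategory of objects `X` such that `ε_X` is an
isomorphism.  Then `P(X)` lies in `D` for every `X`, and the functor `C ⥤ D`
induced by `P` is left adjoint to the inclusion `D ⥤ C`; a fortiori `D` is a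
reflective subcategory of `C`. -/
theorem stmt_9 {C : Type*} [Category C] (P : C ⥤ C) (ε : 𝟭 C ⟶ P)
    (h₁ : ∀ Y : C, IsIso (ε.app (P.obj Y)))
    (h₂ : ∀ Y : C, IsIso (P.map (ε.app Y))) :
    ∃ h : ∀ X : C, IsIso (ε.app (P.obj X)),
      Nonempty
        (ObjectProperty.lift (fun X : C => IsIso (ε.app X)) P h ⊣
          ObjectProperty.ι (fun X : C => IsIso (ε.app X))) := by
  have hcomm : ∀ X, P.map (ε.app X) = ε.app (P.obj X) := fun X =>
    have := h₁ X
    have := h₁ (P.obj X)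
    have := h₂ X
    ε.map_app_eq_app_obj X
  exact ⟨h₁, ⟨ε.liftAdjunctionι h₁ hcomm⟩⟩
end

section
/- Let M be a weakly symmetric monoidal category with a zero object 0. A weak idempotent e in M is a minimal weak idempotent if and only if e ≠ 0 and every weak idempotent X lying in the Hecke subcategory eM with X ≠ 0 is isomorphic to e. -/
/-! When `e` commutes with every object, `e ⊗ e'` is a weak idempotent absorbed by `e` for
every weak idempotent `e'`; minimality of `e` says exactly that each such object is zero or
isomorphic to `e`. -/

open CategoryTheory MonoidalCategory Limits

/-- An object `e` of a monoidal category is a weak idempotent if `e ⊗ e ≅ e`. -/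
def WeakIdempotent {M : Type*} [Category M] [MonoidalCategory M] (e : M) : Prop :=
  Nonempty (e ⊗ e ≅ e)

/-- In a (weakly symmetric) monoidal category with a zero object, a minimal weak
idempotent is a nonzero weak idempotent `e` such that for every weak idempotent `e'`
one has either `e ⊗ e' = 0` or `e ⊗ e' ≅ e`. -/
def MinimalWeakIdempotent {M : Type*} [Category M] [MonoidalCategory M] (e : M) : Prop :=
  WeakIdempotent e ∧ ¬ IsZero e ∧
    ∀ e' : M, WeakIdempotent e' → IsZero (e ⊗ e') ∨ Nonempty (e ⊗ e' ≅ e)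

section

variable {M : Type*} [Category M] [MonoidalCategory M] {e e' : M}

theorem WeakIdempotent.tensor (he : WeakIdempotent e) (he' : WeakIdempotent e')
    (hcomm : Nonempty (e' ⊗ e ≅ e ⊗ e')) : WeakIdempotent (e ⊗ e') := by
  obtain ⟨f⟩ := he
  obtain ⟨f'⟩ := he'
  obtain ⟨sw⟩ := hcomm
  exact ⟨calc (e ⊗ e') ⊗ (e ⊗ e')
      _ ≅ ((e ⊗ e') ⊗ e) ⊗ e' := (α_ _ _ _).symm
      _ ≅ (e ⊗ (e' ⊗ e)) ⊗ e' := whiskerRightIso (α_ _ _ _) e'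
      _ ≅ (e ⊗ (e ⊗ e')) ⊗ e' := whiskerRightIso (whiskerLeftIso e sw) e'
      _ ≅ ((e ⊗ e) ⊗ e') ⊗ e' := whiskerRightIso (α_ _ _ _).symm e'
      _ ≅ (e ⊗ e') ⊗ e' := whiskerRightIso (whiskerRightIso f e') e'
      _ ≅ e ⊗ (e' ⊗ e') := α_ _ _ _
      _ ≅ e ⊗ e' := whiskerLeftIso e f'⟩

theorem WeakIdempotent.nonempty_tensor_tensor_iso (he : WeakIdempotent e) (X : M) :
    Nonempty (e ⊗ (e ⊗ X) ≅ e ⊗ X) :=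
  he.map fun f => (α_ e e X).symm ≪≫ whiskerRightIso f X

theorem MinimalWeakIdempotent.nonempty_iso_of_tensor_iso (h : MinimalWeakIdempotent e)
    {X : M} (hX : WeakIdempotent X) (heX : Nonempty (e ⊗ X ≅ X)) (hX0 : ¬ IsZero X) :
    Nonempty (X ≅ e) := by
  obtain ⟨g⟩ := heX
  rcases h.2.2 X hX with hz | ⟨⟨g'⟩⟩
  · exact absurd (hz.of_iso g.symm) hX0
  · exact ⟨g.symm ≪≫ g'⟩

theorem WeakIdempotent.minimalWeakIdempotent (he : WeakIdempotent e)
    (hcomm : ∀ X : M, Nonempty (X ⊗ e ≅ e ⊗ X)) (he0 : ¬ IsZero e)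
    (hmin : ∀ X : M, WeakIdempotent X → Nonempty (e ⊗ X ≅ X) → ¬ IsZero X →
      Nonempty (X ≅ e)) :
    MinimalWeakIdempotent e := by
  refine ⟨he, he0, fun e' he' => or_iff_not_imp_left.2 fun hz => ?_⟩
  exact hmin (e ⊗ e') (he.tensor he' (hcomm e')) (he.nonempty_tensor_tensor_iso e') hz

end

theorem stmt_10_general {M : Type*} [Category M] [MonoidalCategory M]
    (ws : Nonempty (curriedTensor M ≅ (curriedTensor M).flip))
    (e : M) (he : WeakIdempotent e) :
    MinimalWeakIdempotent e ↔
      (¬ IsZero e ∧ ∀ X : M, WeakIdempotent X → Nonempty (e ⊗ X ≅ X) →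
        ¬ IsZero X → Nonempty (X ≅ e)) := by
  obtain ⟨σ⟩ := ws
  refine ⟨fun h => ⟨h.2.1, fun X hX => h.nonempty_iso_of_tensor_iso hX⟩,
    fun ⟨he0, hmin⟩ => he.minimalWeakIdempotent (fun X => ⟨(σ.app X).app e⟩) he0 hmin⟩

/-- Let `M` be a weakly symmetric monoidal category (the tensor functor
is isomorphic to its flip) with a zero object.  A weak idempotent `e` is a minimal
weak idempotent iff `e ≠ 0` and every nonzero weak idempotent `X` lying in the Hecke
subcategory `eM` (i.e. with `e ⊗ X ≅ X`) is isomorphic to `e`. -/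
theorem stmt_10 {M : Type*} [Category M] [MonoidalCategory M] [HasZeroObject M]
    (ws : Nonempty (curriedTensor M ≅ (curriedTensor M).flip))
    (e : M) (he : WeakIdempotent e) :
    MinimalWeakIdempotent e ↔
      (¬ IsZero e ∧ ∀ X : M, WeakIdempotent X → Nonempty (e ⊗ X ≅ X) →
        ¬ IsZero X → Nonempty (X ≅ e)) :=
  stmt_10_general ws e he
end

section
/- Let M be a weakly symmetric monoidal category and let e be a weak idempotent in M. If the functor M → eM given by X ↦ e ⊗ X is left adjoint to the inclusion functor eM → M, then e is a closed idempotent in M. -/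
open CategoryTheory MonoidalCategory

/-!
The unit `η : 𝟙 ⟶ L 𝟙 ≅ e ⊗ 𝟙 ≅ e` of the reflection gives the candidate `π`. Since the
inclusion is fully faithful, `L` inverts every unit component, so `e ⊗ -` (which is `L`
followed by the inclusion) sends `η` to an isomorphism: `e ◁ π` is invertible. Weak symmetry
identifies `π ▷ e` with `e ◁ π` as arrows.
-/

section

variable {M : Type*} [Category M] [MonoidalCategory M]

lemma isIso_whiskerRight_iff_isIso_whiskerLeft
    (β : curriedTensor M ≅ (curriedTensor M).flip) {X Y : M} (f : X ⟶ Y) (Z : M) :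
    IsIso (f ▷ Z) ↔ IsIso (Z ◁ f) :=
  NatIso.isIso_map_iff (Functor.isoWhiskerRight β ((evaluation M M).obj Z)) f

lemma isIso_whiskerLeft_unit_app {C : Type*} [Category C] {L : M ⥤ C} {R : C ⥤ M}
    [R.Full] [R.Faithful] (adj : L ⊣ R) (e : M) (hL : L ⋙ R ≅ tensorLeft e) (X : M) :
    IsIso (e ◁ adj.unit.app X) :=
  (NatIso.isIso_map_iff hL _).mp (inferInstanceAs (IsIso (R.map (L.map _))))

end

theorem stmt_12_general {M : Type*} [Category M] [MonoidalCategory M]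
    (ws : Nonempty (curriedTensor M ≅ (curriedTensor M).flip))
    (e : M)
    (L : M ⥤ ObjectProperty.FullSubcategory (fun X : M => Nonempty (e ⊗ X ≅ X)))
    (hL : L ⋙ ObjectProperty.ι (fun X : M => Nonempty (e ⊗ X ≅ X)) ≅
      tensorLeft e)
    (adj : L ⊣ ObjectProperty.ι (fun X : M => Nonempty (e ⊗ X ≅ X))) :
    ∃ π : 𝟙_ M ⟶ e, IsIso (π ▷ e) ∧ IsIso (e ◁ π) := by
  obtain ⟨β⟩ := ws
  let π : 𝟙_ M ⟶ e := adj.unit.app (𝟙_ M) ≫ hL.hom.app (𝟙_ M) ≫ (ρ_ e).hom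
  have hπ : IsIso (e ◁ π) := by
    have := isIso_whiskerLeft_unit_app adj e hL (𝟙_ M)
    simp only [π, whiskerLeft_comp]
    infer_instance
  exact ⟨π, (isIso_whiskerRight_iff_isIso_whiskerLeft β π e).mpr hπ, hπ⟩

/-- Let `M` be a weakly symmetric monoidal category (the tensor functor
is isomorphic to its flip) and `e` a weak idempotent in `M`.  If the functor
`M → eM`, `X ↦ e ⊗ X`, is left adjoint to the inclusion of the full subcategory
`eM = {X | e ⊗ X ≅ X}`, then `e` is a closed idempotent, i.e. there exists an
idempotent arrow `π : 𝟙 → e`. -/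
theorem stmt_12 {M : Type*} [Category M] [MonoidalCategory M]
    (ws : Nonempty (curriedTensor M ≅ (curriedTensor M).flip))
    (e : M) (he : Nonempty (e ⊗ e ≅ e))
    (L : M ⥤ ObjectProperty.FullSubcategory (fun X : M => Nonempty (e ⊗ X ≅ X)))
    (hL : L ⋙ ObjectProperty.ι (fun X : M => Nonempty (e ⊗ X ≅ X)) ≅
      tensorLeft e)
    (adj : L ⊣ ObjectProperty.ι (fun X : M => Nonempty (e ⊗ X ≅ X))) :
    ∃ π : 𝟙_ M ⟶ e, IsIso (π ▷ e) ∧ IsIso (e ◁ π) :=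
  stmt_12_general ws e L hL adj
end

section
/- Let Γ be a finite group, N ⊆ Γ a normal subgroup, and χ : N → ℂˣ a (not necessarily Γ-invariant) group homomorphism. Let Γ_χ = { g ∈ Γ | χ(g n g⁻¹) = χ(n) for all n ∈ N } be the normalizer of χ in Γ, and let χ̄ : Γ → ℂ be the extension of χ by zero outside of N. If f : Γ → ℂ is invariant under conjugation by N (i.e., f(n g n⁻¹) = f(g) for all n ∈ N, g ∈ Γ), then the convolution χ̄ * f vanishes at every g ∈ Γ with g ∉ Γ_χ. -/
open Finset

theorem Fintype.sum_eq_zero_of_comp_equiv_eq_mul {α R : Type*} [Fintype α] [Ring R]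
    [NoZeroDivisors R] (e : α ≃ α) {T : α → R} {c : R} (hc : c ≠ 1)
    (h : ∀ u, T (e u) = c * T u) : ∑ u, T u = 0 := by
  have hfixed : c * ∑ u, T u = ∑ u, T u := by
    rw [mul_sum, ← e.sum_comp T]
    simp only [h]
  have : (c - 1) * ∑ u, T u = 0 := by rw [sub_mul, one_mul, hfixed, sub_self]
  exact (mul_eq_zero.mp this).resolve_left (sub_ne_zero.mpr hc)

namespace MonoidHom

variable {Γ M : Type*} [Group Γ] [MonoidWithZero M] {N : Subgroup Γ} [DecidablePred (· ∈ N)]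

def extendByZero (χ : N →* Mˣ) (u : Γ) : M :=
  if h : u ∈ N then (χ ⟨u, h⟩ : M) else 0

theorem extendByZero_mul_mul (χ : N →* Mˣ) (a b : N) (u : Γ) :
    χ.extendByZero (a * u * b) = χ a * χ.extendByZero u * χ b := by
  by_cases hu : u ∈ N
  · have haub : (a : Γ) * u * b ∈ N := mul_mem (mul_mem a.2 hu) b.2
    have : (⟨a * u * b, haub⟩ : N) = a * ⟨u, hu⟩ * b := rfl
    simp only [extendByZero, dif_pos hu, dif_pos haub, this, map_mul, Units.val_mul]
  · have haub : (a : Γ) * u * b ∉ N := by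
      rwa [Subgroup.mul_mem_cancel_right _ b.2, Subgroup.mul_mem_cancel_left _ a.2]
    simp only [extendByZero, dif_neg hu, dif_neg haub, mul_zero, zero_mul]

end MonoidHom

-- If `g ∉ Γ_χ` is witnessed by `m ∈ N`, the substitution `u ↦ (g m g⁻¹) u m⁻¹` leaves the sum
-- unchanged but scales every term by `χ (g m g⁻¹) χ(m)⁻¹ ≠ 1`.
/-- Let `Γ` be a finite group, `N ⊆ Γ` a normal subgroup, and
`χ : N →* ℂˣ` a (not necessarily `Γ`-invariant) homomorphism.  Let
`Γ_χ = {g | χ (g n g⁻¹) = χ n for all n ∈ N}` be the normalizer of `χ` in `Γ`, and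
let `χ̄ : Γ → ℂ` be the extension of `χ` by zero outside `N`.  If `f : Γ → ℂ` is
invariant under conjugation by `N`, then the convolution
`(χ̄ * f)(g) = ∑ u, χ̄ u * f (u⁻¹ g)` vanishes at every `g ∉ Γ_χ`. -/
theorem stmt_18 (Γ : Type*) [Group Γ] [Fintype Γ]
    (N : Subgroup Γ) (hN : N.Normal) [DecidablePred (· ∈ N)]
    (χ : ↥N →* ℂˣ) (f : Γ → ℂ)
    (hf : ∀ n ∈ N, ∀ g : Γ, f (n * g * n⁻¹) = f g)
    (g : Γ)
    (hg : g ∉ {g : Γ | ∀ n : ↥N,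
      χ ⟨g * (n : Γ) * g⁻¹, hN.conj_mem (n : Γ) n.2 g⟩ = χ n}) :
    (∑ u : Γ, (if h : u ∈ N then ((χ ⟨u, h⟩ : ℂˣ) : ℂ) else 0) * f (u⁻¹ * g)) = 0 := by
  simp only [Set.mem_ofPred_eq, not_forall] at hg
  obtain ⟨m, hm⟩ := hg
  set n : N := ⟨g * m * g⁻¹, hN.conj_mem m m.2 g⟩
  have hc : ((χ n : ℂ) * (χ m⁻¹ : ℂ)) ≠ 1 := by
    rw [map_inv, ← Units.val_mul, Ne, Units.val_eq_one, mul_inv_eq_one]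
    exact hm
  refine Fintype.sum_eq_zero_of_comp_equiv_eq_mul
    ((Equiv.mulLeft (n : Γ)).trans (Equiv.mulRight (m⁻¹ : Γ))) hc fun u => ?_
  have hconj : f ((n * u * (m : Γ)⁻¹)⁻¹ * g) = f (u⁻¹ * g) := by
    rw [← hf m m.2 (u⁻¹ * g)]
    congr 1
    simp only [n]
    group
  change χ.extendByZero (n * u * (m : Γ)⁻¹) * f ((n * u * (m : Γ)⁻¹)⁻¹ * g) =
    _ * (χ.extendByZero u * _)
  rw [hconj, ← Subgroup.coe_inv, χ.extendByZero_mul_mul]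
  ring
end
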